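/- arXiv:2504.17552 — 2 statements merged into one kernel-verified Lean document; each statement's English description precedes it below -/
import Mathlib

section
/- Let A and B be N×N Hermitian matrices with eigenvalues λ₁(A) ≤ ... ≤ λ_N(A) and λ₁(B) ≤ ... ≤ λ_N(B). Then Σ_{i=1}^N (λ_i(A) − λ_i(B))² ≤ Tr[(A−B)²]. -/
/-!
Diagonalize `A = U diag(α) U*` and `B = V diag(β) V*` and put `W = U* V`. Then
`Tr[(A - B)²] = ∑ᵢⱼ |Wᵢⱼ|² (αᵢ - βⱼ)²`, and since `W` is unitary the matrix `(|Wᵢⱼ|²)` is doubly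
stochastic. By Birkhoff's theorem this linear function of `(|Wᵢⱼ|²)` is at least its value
`∑ᵢ (αᵢ - β_{σ i})²` at some permutation matrix, and by the rearrangement inequality that sum is
smallest when both sequences are sorted.
-/

open Matrix

theorem exists_perm_sum_le_of_mem_doublyStochastic {n : Type*} [Fintype n] [DecidableEq n]
    (C : n → n → ℝ) {S : Matrix n n ℝ} (hS : S ∈ doublyStochastic ℝ n) :
    ∃ σ : Equiv.Perm n, ∑ i, C i (σ i) ≤ ∑ i, ∑ j, S i j * C i j := by
  let L : Matrix n n ℝ →ₗ[ℝ] ℝ :=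
    { toFun := fun S => ∑ i, ∑ j, S i j * C i j
      map_add' := fun S T => by simp only [Matrix.add_apply, add_mul, Finset.sum_add_distrib]
      map_smul' := fun c S => by
        simp only [Matrix.smul_apply, smul_eq_mul, mul_assoc, Finset.mul_sum, RingHom.id_apply] }
  rw [← SetLike.mem_coe, doublyStochastic_eq_convexHull_permMatrix] at hS
  obtain ⟨_, ⟨σ, rfl⟩, hσ⟩ :=
    (L.concaveOn convex_univ).exists_le_of_mem_convexHull (Set.subset_univ _) hS
  refine ⟨σ, le_of_eq_of_le ?_ hσ⟩
  simp [L, Equiv.Perm.permMatrix, PEquiv.toMatrix_apply]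

theorem sum_sub_sort_sq_le_sum_sub_comp_perm_sq {n : ℕ} (f g : Fin n → ℝ)
    (σ : Equiv.Perm (Fin n)) :
    ∑ i, (f (Tuple.sort f i) - g (Tuple.sort g i)) ^ 2 ≤ ∑ i, (f i - g (σ i)) ^ 2 := by
  set sf := Tuple.sort f
  set sg := Tuple.sort g
  have hmono : Monovary (f ∘ sf) (g ∘ sg) :=
    (Tuple.monotone_sort f).monovary (Tuple.monotone_sort g)
  have hcross : ∑ i, f i * g (σ i) ≤ ∑ i, f (sf i) * g (sg i) := by
    calc ∑ i, f i * g (σ i)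
        = ∑ i, (f ∘ sf) i * (g ∘ sg) (((sf.trans σ).trans sg.symm) i) := by
          rw [← Equiv.sum_comp sf]; simp
      _ ≤ _ := hmono.sum_mul_comp_perm_le_sum_mul
  have hf : ∑ i, f (sf i) ^ 2 = ∑ i, f i ^ 2 := Equiv.sum_comp sf (f · ^ 2)
  have hg : ∑ i, g (sg i) ^ 2 = ∑ i, g (σ i) ^ 2 := by
    rw [Equiv.sum_comp sg (g · ^ 2), Equiv.sum_comp σ (g · ^ 2)]
  simp only [sub_sq, Finset.sum_add_distrib, Finset.sum_sub_distrib, mul_assoc, ← Finset.mul_sum,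
    hf, hg]
  linarith

variable {𝕜 n : Type*} [RCLike 𝕜] [Fintype n]

theorem norm_sq_mem_doublyStochastic_of_mem_unitary [DecidableEq n] {W : Matrix n n 𝕜}
    (hW : W ∈ unitary (Matrix n n 𝕜)) :
    (of fun i j => ‖W i j‖ ^ 2) ∈ doublyStochastic ℝ n := by
  have hrow (i : n) : ∑ j, ‖W i j‖ ^ 2 = 1 := by
    have h : (W * star W) i i = (1 : Matrix n n 𝕜) i i := by rw [Unitary.mul_star_self_of_mem hW]
    simp only [mul_apply, star_apply, one_apply_eq, RCLike.star_def, RCLike.mul_conj] at h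
    exact_mod_cast h
  have hcol (j : n) : ∑ i, ‖W i j‖ ^ 2 = 1 := by
    have h : (star W * W) j j = (1 : Matrix n n 𝕜) j j := by rw [Unitary.star_mul_self_of_mem hW]
    simp only [mul_apply, star_apply, one_apply_eq, RCLike.star_def, RCLike.conj_mul] at h
    exact_mod_cast h
  exact mem_doublyStochastic_iff_sum.2 ⟨fun i j => sq_nonneg _, hrow, hcol⟩

theorem re_trace_mul_conjTranspose_self (M : Matrix n n 𝕜) :
    RCLike.re (M * Mᴴ).trace = ∑ i, ∑ j, ‖M i j‖ ^ 2 := by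
  simp only [trace, diag_apply, mul_apply, conjTranspose_apply, RCLike.star_def, RCLike.mul_conj,
    map_sum]
  norm_cast

namespace Matrix.IsHermitian

variable [DecidableEq n] {A B : Matrix n n 𝕜}

theorem sub_eq_eigenvectorUnitary_mul (hA : A.IsHermitian) (hB : B.IsHermitian) :
    let U : Matrix n n 𝕜 := hA.eigenvectorUnitary
    let V : Matrix n n 𝕜 := hB.eigenvectorUnitary
    A - B = U * (diagonal (RCLike.ofReal ∘ hA.eigenvalues) * (star U * V) -
        (star U * V) * diagonal (RCLike.ofReal ∘ hB.eigenvalues)) * star V := by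
  intro U V
  have hU : U * star U = 1 := Unitary.mul_star_self_of_mem hA.eigenvectorUnitary.2
  have hV : V * star V = 1 := Unitary.mul_star_self_of_mem hB.eigenvectorUnitary.2
  conv_lhs => rw [hA.spectral_theorem, hB.spectral_theorem]
  simp only [Unitary.conjStarAlgAut_apply, mul_sub, sub_mul, mul_assoc, hV, mul_one]
  rw [← mul_assoc U (star U), hU, one_mul]

theorem re_trace_sub_mul_sub (hA : A.IsHermitian) (hB : B.IsHermitian) :
    let W : Matrix n n 𝕜 := star (hA.eigenvectorUnitary : Matrix n n 𝕜) * hB.eigenvectorUnitary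
    RCLike.re ((A - B) * (A - B)).trace =
      ∑ i, ∑ j, ‖W i j‖ ^ 2 * (hA.eigenvalues i - hB.eigenvalues j) ^ 2 := by
  intro W
  set U : Matrix n n 𝕜 := ↑hA.eigenvectorUnitary
  set V : Matrix n n 𝕜 := ↑hB.eigenvectorUnitary
  have hU : star U * U = 1 := Unitary.star_mul_self_of_mem hA.eigenvectorUnitary.2
  have hV : star V * V = 1 := Unitary.star_mul_self_of_mem hB.eigenvectorUnitary.2
  set M :=
    diagonal (RCLike.ofReal ∘ hA.eigenvalues) * W - W * diagonal (RCLike.ofReal ∘ hB.eigenvalues)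
  have hM : (A - B) * (A - B)ᴴ = U * (M * Mᴴ) * star U := by
    have hsub : A - B = U * M * star V := sub_eq_eigenvectorUnitary_mul hA hB
    rw [hsub, ← star_eq_conjTranspose, ← star_eq_conjTranspose]
    simp only [star_mul, star_star, mul_assoc]
    rw [← mul_assoc (star V), hV, one_mul]
  have hentry (i j : n) :
      ‖M i j‖ ^ 2 = ‖W i j‖ ^ 2 * (hA.eigenvalues i - hB.eigenvalues j) ^ 2 := by
    simp only [M, sub_apply, diagonal_mul, mul_diagonal, Function.comp_apply]
    rw [mul_comm (W i j), ← sub_mul, ← RCLike.ofReal_sub, norm_mul, RCLike.norm_ofReal, mul_pow,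
      sq_abs, mul_comm]
  calc RCLike.re ((A - B) * (A - B)).trace = RCLike.re ((A - B) * (A - B)ᴴ).trace := by
        rw [(hA.sub hB).eq]
    _ = RCLike.re (M * Mᴴ).trace := by
        rw [hM, trace_mul_cycle, hU, one_mul]
    _ = _ := by simp only [re_trace_mul_conjTranspose_self, hentry]

end Matrix.IsHermitian

/-- Hoffman–Wielandt: for Hermitian `A, B` with eigenvalues listed in
nondecreasing order, `Σ_i (λ_i(A) − λ_i(B))² ≤ Tr[(A−B)²]`. The sorted eigenvalue
sequences are obtained from Mathlib's eigenvalue functions via `Tuple.sort`. -/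
theorem stmt10 {N : ℕ} (A B : Matrix (Fin N) (Fin N) ℂ)
    (hA : A.IsHermitian) (hB : B.IsHermitian) :
    ∑ i : Fin N,
        ((hA.eigenvalues (Tuple.sort hA.eigenvalues i))
          - hB.eigenvalues (Tuple.sort hB.eigenvalues i)) ^ 2
      ≤ (((A - B) * (A - B)).trace).re := by
  have hW := (star hA.eigenvectorUnitary * hB.eigenvectorUnitary).2
  obtain ⟨σ, hσ⟩ := exists_perm_sum_le_of_mem_doublyStochastic
    (fun i j => (hA.eigenvalues i - hB.eigenvalues j) ^ 2)
    (norm_sq_mem_doublyStochastic_of_mem_unitary hW)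
  calc _ ≤ ∑ i, (hA.eigenvalues i - hB.eigenvalues (σ i)) ^ 2 :=
        sum_sub_sort_sq_le_sum_sub_comp_perm_sq _ _ σ
    _ ≤ _ := hσ
    _ = _ := (hA.re_trace_sub_mul_sub hB).symm
end

section
/- Let A and B be N×N Hermitian matrices, and let μ_A, μ_B denote their empirical spectral distributions (uniform measure on eigenvalues). Then the Lévy–Prokhorov distance satisfies d_L(μ_A, μ_B)³ ≤ (1/N) Tr[(A−B)(A−B)*]. -/
/-!
In eigenbases of `A` and `B`, the entries of `A - B` are `(λᵢ - μⱼ) Wᵢⱼ` with `W` unitary, so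
`Tr[(A - B)(A - B)*]` is the average of `(λᵢ - μⱼ)²` against the doubly stochastic matrix
`|Wᵢⱼ|²`. By Birkhoff's theorem some permutation `σ` does at least as well:
`∑ᵢ (λᵢ - μ_{σ i})² ≤ Tr[(A - B)(A - B)*]` (Hoffman–Wielandt).

Match the atoms of `ESD(A)` with those of `ESD(B)` along `σ`. By Chebyshev, once
`t³ > Tr[(A - B)(A - B)*] / N` fewer than a fraction `t` of the atoms move by `t` or more,
and every other atom of a set `S` lands in the `t`-thickening of `S`; so `d_L ≤ t`.
-/

open Matrix MeasureTheory Metric ENNReal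

/-- The empirical spectral distribution of a Hermitian matrix: the uniform probability
measure on its eigenvalues, `ESD(A) = (1/N) Σ_i δ_{λ_i(A)}`. -/
noncomputable def esd {N : ℕ} {A : Matrix (Fin N) (Fin N) ℂ} (hA : A.IsHermitian) :
    Measure ℝ :=
  ((N : ENNReal))⁻¹ • ∑ i : Fin N, Measure.dirac (hA.eigenvalues i)

namespace Matrix

open Finset

variable {m n 𝕜 : Type*} [RCLike 𝕜] [Fintype m]

theorem re_mul_conjTranspose_self_apply (M : Matrix n m 𝕜) (i : n) :
    RCLike.re ((M * Mᴴ) i i) = ∑ j, ‖M i j‖ ^ 2 := by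
  simp only [mul_apply, conjTranspose_apply, RCLike.star_def, RCLike.mul_conj, map_sum]
  norm_cast

variable [Fintype n]

theorem re_trace_mul_conjTranspose_self (M : Matrix n m 𝕜) :
    RCLike.re (M * Mᴴ).trace = ∑ i, ∑ j, ‖M i j‖ ^ 2 := by
  simp only [trace, diag_apply, map_sum, re_mul_conjTranspose_self_apply]

variable [DecidableEq n]

theorem exists_perm_sum_le_of_mem_doublyStochastic {R : Type*} [Field R] [LinearOrder R]
    [IsStrictOrderedRing R] {P : Matrix n n R} (hP : P ∈ doublyStochastic R n) (f : n → n → R) :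
    ∃ σ : Equiv.Perm n, ∑ i, f i (σ i) ≤ ∑ i, ∑ j, P i j * f i j := by
  let L : Matrix n n R →ₗ[R] R :=
    { toFun M := ∑ i, ∑ j, M i j * f i j
      map_add' M M' := by simp only [add_apply, add_mul, sum_add_distrib]
      map_smul' c M := by
        simp only [smul_apply, smul_eq_mul, mul_assoc, mul_sum, RingHom.id_apply] }
  have hP' : P ∈ convexHull R {σ.permMatrix R | σ : Equiv.Perm n} := by
    rwa [← doublyStochastic_eq_convexHull_permMatrix]
  obtain ⟨_, ⟨σ, rfl⟩, hσ⟩ :=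
    (L.concaveOn convex_univ).exists_le_of_mem_convexHull (Set.subset_univ _) hP'
  refine ⟨σ, le_of_eq_of_le ?_ hσ⟩
  simp [L, Equiv.Perm.permMatrix, PEquiv.toMatrix_apply]

theorem norm_sq_mem_doublyStochastic {U : Matrix n n 𝕜} (hU : U ∈ unitaryGroup n 𝕜) :
    of (fun i j => ‖U i j‖ ^ 2) ∈ doublyStochastic ℝ n := by
  refine mem_doublyStochastic_iff_sum.2 ⟨fun i j => sq_nonneg _, fun i => ?_, fun j => ?_⟩
  · have h := re_mul_conjTranspose_self_apply U i
    rw [← star_eq_conjTranspose, Unitary.mul_star_self_of_mem hU] at h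
    simpa using h.symm
  · have h := re_mul_conjTranspose_self_apply Uᴴ j
    rw [conjTranspose_conjTranspose, ← star_eq_conjTranspose, Unitary.star_mul_self_of_mem hU] at h
    simpa using h.symm

theorem trace_unitary_mul_mul_unitary_mul_conjTranspose {U V : Matrix n n 𝕜}
    (hU : U ∈ unitaryGroup n 𝕜) (hV : V ∈ unitaryGroup n 𝕜) (M : Matrix n n 𝕜) :
    (U * M * V * (U * M * V)ᴴ).trace = (M * Mᴴ).trace := by
  have hVV : V * Vᴴ = 1 := Unitary.mul_star_self_of_mem hV
  have hUU : Uᴴ * U = 1 := Unitary.star_mul_self_of_mem hU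
  calc (U * M * V * (U * M * V)ᴴ).trace = (U * (M * (V * Vᴴ) * Mᴴ) * Uᴴ).trace := by
        simp only [conjTranspose_mul, Matrix.mul_assoc]
    _ = (M * Mᴴ * (Uᴴ * U)).trace := by
        rw [hVV, Matrix.mul_one, Matrix.mul_assoc, trace_mul_comm]; simp only [Matrix.mul_assoc]
    _ = (M * Mᴴ).trace := by rw [hUU, Matrix.mul_one]

namespace IsHermitian

theorem star_eigenvectorUnitary_mul_mul_eigenvectorUnitary {A : Matrix n n 𝕜}
    (hA : A.IsHermitian) :
    star (hA.eigenvectorUnitary : Matrix n n 𝕜) * A * (hA.eigenvectorUnitary : Matrix n n 𝕜)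
      = diagonal (RCLike.ofReal ∘ hA.eigenvalues) := by
  rw [← conjStarAlgAut_star_eigenvectorUnitary, Unitary.conjStarAlgAut_star_apply]

theorem star_eigenvectorUnitary_mul_sub_mul_eigenvectorUnitary_apply {A B : Matrix n n 𝕜}
    (hA : A.IsHermitian) (hB : B.IsHermitian) (i j : n) :
    (star (hA.eigenvectorUnitary : Matrix n n 𝕜) * (A - B) * hB.eigenvectorUnitary) i j
      = (hA.eigenvalues i - hB.eigenvalues j : ℝ)
        * (star (hA.eigenvectorUnitary : Matrix n n 𝕜) * hB.eigenvectorUnitary) i j := by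
  set U := (hA.eigenvectorUnitary : Matrix n n 𝕜)
  set V := (hB.eigenvectorUnitary : Matrix n n 𝕜)
  have hA' : star U * A * V = diagonal (RCLike.ofReal ∘ hA.eigenvalues) * (star U * V) := by
    calc star U * A * V = star U * A * (U * star U) * V := by
          rw [Unitary.mul_star_self_of_mem hA.eigenvectorUnitary.2, Matrix.mul_one]
      _ = (star U * A * U) * (star U * V) := by simp only [Matrix.mul_assoc]
      _ = _ := congrArg (· * (star U * V)) hA.star_eigenvectorUnitary_mul_mul_eigenvectorUnitary
  have hB' : star U * B * V = (star U * V) * diagonal (RCLike.ofReal ∘ hB.eigenvalues) := by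
    calc star U * B * V = star U * (V * star V) * B * V := by
          rw [Unitary.mul_star_self_of_mem hB.eigenvectorUnitary.2, Matrix.mul_one]
      _ = (star U * V) * (star V * B * V) := by simp only [Matrix.mul_assoc]
      _ = _ := congrArg (star U * V * ·) hB.star_eigenvectorUnitary_mul_mul_eigenvectorUnitary
  rw [Matrix.mul_sub, Matrix.sub_mul, sub_apply, hA', hB', diagonal_mul, mul_diagonal]
  simp only [Function.comp_apply, RCLike.ofReal_sub]
  ring

theorem exists_perm_sum_sq_eigenvalues_sub_le {A B : Matrix n n 𝕜}
    (hA : A.IsHermitian) (hB : B.IsHermitian) :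
    ∃ σ : Equiv.Perm n, ∑ i, (hA.eigenvalues i - hB.eigenvalues (σ i)) ^ 2
      ≤ RCLike.re ((A - B) * (A - B)ᴴ).trace := by
  set U := (hA.eigenvectorUnitary : Matrix n n 𝕜)
  set V := (hB.eigenvectorUnitary : Matrix n n 𝕜)
  have hU : star U ∈ unitaryGroup n 𝕜 := Unitary.star_mem hA.eigenvectorUnitary.2
  have hW : star U * V ∈ unitaryGroup n 𝕜 := Submonoid.mul_mem _ hU hB.eigenvectorUnitary.2
  obtain ⟨σ, hσ⟩ := exists_perm_sum_le_of_mem_doublyStochastic (norm_sq_mem_doublyStochastic hW)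
    fun i j => (hA.eigenvalues i - hB.eigenvalues j) ^ 2
  refine ⟨σ, hσ.trans (le_of_eq ?_)⟩
  rw [← trace_unitary_mul_mul_unitary_mul_conjTranspose hU hB.eigenvectorUnitary.2,
    re_trace_mul_conjTranspose_self]
  simp only [star_eigenvectorUnitary_mul_sub_mul_eigenvectorUnitary_apply, norm_mul,
    RCLike.norm_ofReal, mul_pow, sq_abs, of_apply, mul_comm, U, V]

end IsHermitian

end Matrix

section EmpiricalMeasure

open Finset

variable {ι X : Type*} [Fintype ι]

lemma card_le_dist_mul_sq_le_sum [PseudoMetricSpace X] (x y : ι → X) {t : ℝ} (ht : 0 ≤ t) :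
    (#{i | t ≤ dist (x i) (y i)} : ℝ) * t ^ 2 ≤ ∑ i, dist (x i) (y i) ^ 2 :=
  calc (#{i | t ≤ dist (x i) (y i)} : ℝ) * t ^ 2
      = ∑ i with t ≤ dist (x i) (y i), t ^ 2 := by rw [sum_const, nsmul_eq_mul]
    _ ≤ ∑ i with t ≤ dist (x i) (y i), dist (x i) (y i) ^ 2 :=
        sum_le_sum fun i hi => pow_le_pow_left₀ ht (mem_filter.1 hi).2 2
    _ ≤ ∑ i, dist (x i) (y i) ^ 2 :=
        sum_le_sum_of_subset_of_nonneg (filter_subset _ _) fun _ _ _ => sq_nonneg _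

variable [MeasurableSpace X]

noncomputable def empiricalMeasure (x : ι → X) : Measure X :=
  (Fintype.card ι : ℝ≥0∞)⁻¹ • ∑ i, Measure.dirac (x i)

lemma empiricalMeasure_comp_equiv (x : ι → X) (σ : ι ≃ ι) :
    empiricalMeasure (x ∘ σ) = empiricalMeasure x := by
  simp only [empiricalMeasure, Function.comp_apply, Equiv.sum_comp σ (fun i => Measure.dirac (x i))]

lemma empiricalMeasure_apply (x : ι → X) (s : Set X) :
    empiricalMeasure x s = (Fintype.card ι : ℝ≥0∞)⁻¹ * ∑ i, Measure.dirac (x i) s := by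
  rw [empiricalMeasure, Measure.smul_apply, Measure.finsetSum_apply, smul_eq_mul]

variable [PseudoMetricSpace X]

lemma empiricalMeasure_le_thickening_add (x y : ι → X) {B : Set X}
    (hB : MeasurableSet B) (t : ℝ) :
    empiricalMeasure x B ≤ empiricalMeasure y (thickening t B)
      + (Fintype.card ι : ℝ≥0∞)⁻¹ * #{i | t ≤ dist (x i) (y i)} := by
  have atom (i : ι) : Measure.dirac (x i) B
      ≤ Measure.dirac (y i) (thickening t B) + if t ≤ dist (x i) (y i) then 1 else 0 := by
    by_cases hxB : x i ∈ B
    · by_cases hd : t ≤ dist (x i) (y i)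
      · simpa [hd] using le_add_left prob_le_one
      · have : y i ∈ thickening t B :=
          mem_thickening_iff.2 ⟨x i, hxB, by rw [dist_comm]; exact not_le.1 hd⟩
        rw [Measure.dirac_apply_of_mem this]
        exact le_add_right prob_le_one
    · simp [Measure.dirac_apply' _ hB, hxB]
  calc empiricalMeasure x B
      ≤ (Fintype.card ι : ℝ≥0∞)⁻¹ * ∑ i, (Measure.dirac (y i) (thickening t B)
          + if t ≤ dist (x i) (y i) then 1 else 0) := by
        rw [empiricalMeasure_apply]; gcongr with i; exact atom i
    _ = _ := by
        rw [sum_add_distrib, mul_add, empiricalMeasure_apply, sum_boole]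

lemma empiricalMeasure_le_thickening_add_ofReal (x y : ι → X) {c t : ℝ} (hc : 0 ≤ c)
    (hct : c < t) (h : ∑ i, dist (x i) (y i) ^ 2 ≤ Fintype.card ι * c ^ 3) {B : Set X}
    (hB : MeasurableSet B) :
    empiricalMeasure x B ≤ empiricalMeasure y (thickening t B) + ENNReal.ofReal t := by
  have ht : 0 < t := hc.trans_lt hct
  set N := Fintype.card ι
  set K := #{i | t ≤ dist (x i) (y i)}
  have hK : (K : ℝ) ≤ N * t := by
    refine le_of_mul_le_mul_right ?_ (pow_pos ht 2)
    calc (K : ℝ) * t ^ 2 ≤ N * c ^ 3 := (card_le_dist_mul_sq_le_sum x y ht.le).trans h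
      _ ≤ N * t ^ 3 := by gcongr
      _ = N * t * t ^ 2 := by ring
  refine (empiricalMeasure_le_thickening_add x y hB t).trans (add_le_add_right ?_ _)
  calc (N : ℝ≥0∞)⁻¹ * K ≤ (N : ℝ≥0∞)⁻¹ * (N * ENNReal.ofReal t) := by
        gcongr
        rw [← ofReal_natCast, ← ofReal_natCast N, ← ofReal_mul (Nat.cast_nonneg N)]
        exact ofReal_le_ofReal hK
    _ ≤ ENNReal.ofReal t := by
        rw [← mul_assoc]
        exact mul_le_of_le_one_left' (ENNReal.inv_mul_le_one _)

lemma levyProkhorovDist_empiricalMeasure_le (x y : ι → X) {c : ℝ} (hc : 0 ≤ c)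
    (h : ∑ i, dist (x i) (y i) ^ 2 ≤ Fintype.card ι * c ^ 3) :
    levyProkhorovDist (empiricalMeasure x) (empiricalMeasure y) ≤ c := by
  have h' : ∑ i, dist (y i) (x i) ^ 2 ≤ Fintype.card ι * c ^ 3 := by simpa only [dist_comm] using h
  refine toReal_le_of_le_ofReal hc (levyProkhorovEDist_le_of_forall _ _ _ ?_)
  intro ε B hε hε_top hB
  have hct : c < ε.toReal := by
    simpa [ENNReal.toReal_ofReal hc] using (ENNReal.toReal_lt_toReal ofReal_ne_top hε_top.ne).2 hε
  have key := fun (x y : ι → X) h => empiricalMeasure_le_thickening_add_ofReal x y hc hct h hB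
  rw [ofReal_toReal hε_top.ne] at key
  exact ⟨key x y h, key y x h'⟩

lemma levyProkhorovDist_empiricalMeasure_pow_three_le (x y : ι → X) :
    levyProkhorovDist (empiricalMeasure x) (empiricalMeasure y) ^ 3
      ≤ (∑ i, dist (x i) (y i) ^ 2) / Fintype.card ι := by
  set S := ∑ i, dist (x i) (y i) ^ 2
  have hS : 0 ≤ S / Fintype.card ι := by positivity
  set c := (S / Fintype.card ι) ^ ((3 : ℕ)⁻¹ : ℝ)
  have hc3 : c ^ 3 = S / Fintype.card ι := Real.rpow_inv_natCast_pow hS three_ne_zero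
  have h : S ≤ Fintype.card ι * c ^ 3 := by
    rcases isEmpty_or_nonempty ι with hι | hι
    · simp [S]
    · rw [hc3, mul_div_cancel₀ _ (Nat.cast_ne_zero.2 Fintype.card_ne_zero)]
  rw [← hc3]
  exact pow_le_pow_left₀ toReal_nonneg
    (levyProkhorovDist_empiricalMeasure_le x y (by positivity) h) 3

end EmpiricalMeasure

lemma esd_eq_empiricalMeasure {N : ℕ} {A : Matrix (Fin N) (Fin N) ℂ} (hA : A.IsHermitian) :
    esd hA = empiricalMeasure hA.eigenvalues := by
  rw [esd, empiricalMeasure, Fintype.card_fin]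

/-- Hoffman–Wielandt, Lévy–Prokhorov form: for Hermitian `A, B`,
`d_L(ESD(A), ESD(B))³ ≤ (1/N) Tr[(A−B)(A−B)*]`. -/
theorem stmt11 {N : ℕ} (A B : Matrix (Fin N) (Fin N) ℂ)
    (hA : A.IsHermitian) (hB : B.IsHermitian) :
    (levyProkhorovDist (esd hA) (esd hB)) ^ 3
      ≤ (N : ℝ)⁻¹ * (((A - B) * (A - B)ᴴ).trace).re := by
  obtain ⟨σ, hσ⟩ := hA.exists_perm_sum_sq_eigenvalues_sub_le hB
  rw [esd_eq_empiricalMeasure, esd_eq_empiricalMeasure,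
    ← empiricalMeasure_comp_equiv hB.eigenvalues σ]
  calc _ ≤ (∑ i, dist (hA.eigenvalues i) ((hB.eigenvalues ∘ σ) i) ^ 2) / Fintype.card (Fin N) :=
        levyProkhorovDist_empiricalMeasure_pow_three_le _ _
    _ = (N : ℝ)⁻¹ * ∑ i, (hA.eigenvalues i - hB.eigenvalues (σ i)) ^ 2 := by
        simp only [Real.dist_eq, sq_abs, Function.comp_apply, Fintype.card_fin, div_eq_inv_mul]
    _ ≤ (N : ℝ)⁻¹ * (((A - B) * (A - B)ᴴ).trace).re := by gcongr; exact hσ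
end
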